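/- arXiv:2604.15069 — 3 statements merged into one kernel-verified Lean document; each statement's English description precedes it below -/
import Mathlib

section
/- Let B = (I + L)⁻¹ for the Laplacian L of a finite simple graph. Then B is doubly stochastic: all entries of B are nonnegative, and every row sum and every column sum of B equals 1. -/
/-!
`I + L` is positive definite, hence invertible, and fixes the constant vectors because `L` kills
them; so its inverse fixes them too, which gives the row sums, and the column sums follow by
symmetry. Nonnegativity is a discrete minimum principle: at a vertex where `x` is minimal,
`(L x) u = ∑_{w ~ u} (x u - x w) ≤ 0`, so `(I + L) x ≥ 0` forces `min x ≥ 0`; apply this to the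
columns of `(I + L)⁻¹`.
-/

open Matrix Finset

namespace SimpleGraph

variable {V : Type*} [Fintype V] [DecidableEq V] (G : SimpleGraph V) [DecidableRel G.Adj]

theorem posDef_one_add_lapMatrix : (1 + G.lapMatrix ℝ).PosDef :=
  PosDef.one.add_posSemidef (G.posSemidef_lapMatrix (R := ℝ))

theorem isSymm_one_add_lapMatrix : (1 + G.lapMatrix ℝ).IsSymm :=
  isSymm_one.add (G.isSymm_lapMatrix (R := ℝ))

theorem one_add_lapMatrix_mulVec_one :
    (1 + G.lapMatrix ℝ) *ᵥ (fun _ ↦ 1) = fun _ ↦ 1 := by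
  rw [add_mulVec, one_mulVec, G.lapMatrix_mulVec_const_eq_zero, add_zero]

theorem lapMatrix_mulVec_apply_nonpos_of_forall_le {x : V → ℝ} {u : V} (hu : ∀ w, x u ≤ x w) :
    (G.lapMatrix ℝ *ᵥ x) u ≤ 0 := by
  have hsum : G.degree u * x u ≤ ∑ w ∈ G.neighborFinset u, x w := by
    calc G.degree u * x u = ∑ _w ∈ G.neighborFinset u, x u := by
          rw [sum_const, card_neighborFinset_eq_degree, nsmul_eq_mul]
      _ ≤ ∑ w ∈ G.neighborFinset u, x w := sum_le_sum fun w _ ↦ hu w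
  rw [lapMatrix_mulVec_apply]
  linarith

theorem nonneg_of_one_add_lapMatrix_mulVec_nonneg {x : V → ℝ}
    (hx : ∀ v, 0 ≤ ((1 + G.lapMatrix ℝ) *ᵥ x) v) (v : V) : 0 ≤ x v := by
  have : Nonempty V := ⟨v⟩
  obtain ⟨u, hu⟩ := Finite.exists_min x
  have hxu : 0 ≤ x u + (G.lapMatrix ℝ *ᵥ x) u := by
    simpa only [add_mulVec, one_mulVec, Pi.add_apply] using hx u
  linarith [G.lapMatrix_mulVec_apply_nonpos_of_forall_le hu, hu v]

end SimpleGraph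

theorem dsm_doubly_stochastic
    {n : ℕ} (G : SimpleGraph (Fin n)) [DecidableRel G.Adj]
    (B : Matrix (Fin n) (Fin n) ℝ) (hB : B = (1 + G.lapMatrix ℝ)⁻¹) :
    (∀ i j, 0 ≤ B i j) ∧ (∀ i, ∑ j, B i j = 1) ∧ (∀ j, ∑ i, B i j = 1) := by
  have := G.posDef_one_add_lapMatrix.isUnit.invertible
  have hBsymm : B.IsSymm := hB ▸ G.isSymm_one_add_lapMatrix.inv
  have hBone : B *ᵥ (fun _ ↦ 1) = fun _ ↦ 1 :=
    hB ▸ inv_mulVec_eq_vec G.one_add_lapMatrix_mulVec_one.symm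
  have hrow (i : Fin n) : ∑ j, B i j = 1 := by
    simpa only [mulVec, dotProduct, mul_one] using congrFun hBone i
  refine ⟨fun i j ↦ ?_, hrow, fun j ↦ ?_⟩
  · have hcol : (1 + G.lapMatrix ℝ) *ᵥ B.col j = Pi.single j 1 := by
      rw [← mulVec_single_one, mulVec_mulVec, hB, mul_inv_of_invertible, one_mulVec]
    exact G.nonneg_of_one_add_lapMatrix_mulVec_nonneg
      (fun v ↦ hcol ▸ Pi.single_nonneg.mpr zero_le_one v) i
  · rw [← hrow j]
    exact sum_congr rfl fun i _ ↦ hBsymm.apply j i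
end

section
/- Let G be a finite simple graph with P = (I + D)⁻¹ A. Then the spectral radius of P is strictly less than 1, and consequently (I + L)⁻¹ = (Σ_{k=0}^∞ Pᵏ)(I + D)⁻¹, where L = D - A. -/
/-!
The matrix `P = (I + D)⁻¹ A` has nonnegative entries and its `i`-th row sums to
`dᵢ / (1 + dᵢ) < 1`, so its `ℓ∞`-operator norm is `< 1`. That norm bounds the spectrum, and it
makes the Neumann series `∑ Pᵏ` converge to `(I - P)⁻¹`; the expansion then follows from the
factorization `I + L = (I + D)(I - P)`.
-/

open Matrix

attribute [local instance]
  Matrix.linftyOpSeminormedAddCommGroup Matrix.linftyOpNormedRing Matrix.linftyOpNormedAlgebra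

namespace Matrix

variable {m n α : Type*} [Fintype m] [Fintype n]

theorem linfty_opNorm_lt_iff [SeminormedAddCommGroup α] (A : Matrix m n α) {r : ℝ} (hr : 0 < r) :
    ‖A‖ < r ↔ ∀ i, ∑ j, ‖A i j‖ < r := by
  lift r to NNReal using hr.le
  rw [linfty_opNorm_def, NNReal.coe_lt_coe, Finset.sup_lt_iff (mod_cast hr)]
  simp [← NNReal.coe_lt_coe]

theorem linfty_opNorm_map {β : Type*} [SeminormedAddCommGroup α] [SeminormedAddCommGroup β]
    (A : Matrix m n α) {f : α → β} (hf : ∀ a, ‖f a‖ = ‖a‖) : ‖A.map f‖ = ‖A‖ := by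
  have hf' : ∀ a, ‖f a‖₊ = ‖a‖₊ := fun a => NNReal.eq (hf a)
  simp only [linfty_opNorm_def, map_apply, hf']

theorem norm_le_linfty_opNorm_of_mem_spectrum {𝕜 : Type*} [RCLike 𝕜] [DecidableEq n]
    {A : Matrix n n 𝕜} {z : 𝕜} (hz : z ∈ spectrum 𝕜 A) : ‖z‖ ≤ ‖A‖ := by
  cases isEmpty_or_nonempty n
  · simp [spectrum.of_subsingleton] at hz
  · exact spectrum.norm_le_norm_of_mem hz

end Matrix

namespace SimpleGraph

variable {V R : Type*} [Fintype V] (G : SimpleGraph V) [DecidableRel G.Adj]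

theorem sum_adjMatrix_apply [NonAssocSemiring R] (i : V) :
    ∑ j, G.adjMatrix R i j = G.degree i := by
  simpa [mulVec, dotProduct] using G.adjMatrix_mulVec_const_apply (α := R) (a := 1) (v := i)

theorem one_add_degree_ne_zero [AddCommMonoidWithOne R] [CharZero R] (i : V) :
    1 + (G.degree i : R) ≠ 0 := by
  rw [add_comm]
  exact Nat.cast_add_one_ne_zero _

variable [DecidableEq V]

theorem one_add_degMatrix [AddMonoidWithOne R] :
    1 + G.degMatrix R = diagonal fun i => 1 + (G.degree i : R) := by
  rw [degMatrix, ← diagonal_one, diagonal_add]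

theorem isUnit_one_add_degMatrix [Field R] [CharZero R] : IsUnit (1 + G.degMatrix R) := by
  rw [one_add_degMatrix, isUnit_diagonal]
  exact Pi.isUnit_iff.2 fun i => (G.one_add_degree_ne_zero i).isUnit

theorem inv_one_add_degMatrix [Field R] [CharZero R] :
    (1 + G.degMatrix R)⁻¹ = diagonal fun i => (1 + (G.degree i : R))⁻¹ := by
  refine inv_eq_right_inv ?_
  simp [one_add_degMatrix, one_add_degree_ne_zero]

theorem inv_one_add_degMatrix_mul_adjMatrix_apply [Field R] [CharZero R] (i j : V) :
    ((1 + G.degMatrix R)⁻¹ * G.adjMatrix R) i j =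
      (1 + (G.degree i : R))⁻¹ * G.adjMatrix R i j := by
  rw [inv_one_add_degMatrix, diagonal_mul]

theorem one_add_lapMatrix_eq_mul [Field R] [CharZero R] :
    1 + G.lapMatrix R = (1 + G.degMatrix R) * (1 - (1 + G.degMatrix R)⁻¹ * G.adjMatrix R) := by
  rw [mul_sub, mul_one,
    mul_nonsing_inv_cancel_left _ _ (isUnit_iff_isUnit_det _ |>.1 G.isUnit_one_add_degMatrix),
    lapMatrix]
  abel

theorem linfty_opNorm_inv_one_add_degMatrix_mul_adjMatrix_lt_one :
    ‖(1 + G.degMatrix ℝ)⁻¹ * G.adjMatrix ℝ‖ < 1 := by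
  refine (linfty_opNorm_lt_iff _ one_pos).2 fun i => ?_
  have hd : (0 : ℝ) < 1 + G.degree i := by positivity
  calc ∑ j, ‖((1 + G.degMatrix ℝ)⁻¹ * G.adjMatrix ℝ) i j‖
      = ∑ j, (1 + (G.degree i : ℝ))⁻¹ * G.adjMatrix ℝ i j := by
        refine Finset.sum_congr rfl fun j _ => ?_
        rw [inv_one_add_degMatrix_mul_adjMatrix_apply, Real.norm_of_nonneg]
        by_cases h : G.Adj i j <;> simp [h, hd.le]
    _ = (1 + (G.degree i : ℝ))⁻¹ * G.degree i := by rw [← Finset.mul_sum, sum_adjMatrix_apply]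
    _ < 1 := by rw [inv_mul_lt_iff₀ hd]; linarith

end SimpleGraph

theorem dsm_neumann_expansion
    {n : ℕ} (G : SimpleGraph (Fin n)) [DecidableRel G.Adj]
    (P : Matrix (Fin n) (Fin n) ℝ)
    (hP : P = (1 + G.degMatrix ℝ)⁻¹ * G.adjMatrix ℝ) :
    (∀ z ∈ spectrum ℂ (P.map (algebraMap ℝ ℂ)), ‖z‖ < 1) ∧
    HasSum (fun k : ℕ => P ^ k * (1 + G.degMatrix ℝ)⁻¹) (1 + G.lapMatrix ℝ)⁻¹ := by
  have hP_lt : ‖P‖ < 1 := hP ▸ G.linfty_opNorm_inv_one_add_degMatrix_mul_adjMatrix_lt_one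
  refine ⟨fun z hz => ?_, ?_⟩
  · calc ‖z‖ ≤ ‖P.map (algebraMap ℝ ℂ)‖ := norm_le_linfty_opNorm_of_mem_spectrum hz
      _ = ‖P‖ := linfty_opNorm_map P (norm_algebraMap' ℂ)
      _ < 1 := hP_lt
  · rw [G.one_add_lapMatrix_eq_mul, ← hP, Matrix.mul_inv_rev, nonsing_inv_eq_ringInverse (1 - P)]
    exact (hasSum_geom_series_inverse P hP_lt).mul_right _
end

section
/- Let d_max be the maximum vertex degree of a finite simple graph G, let B = (I+L)⁻¹ and B_K the K-th order truncated Neumann approximation. Then ‖B - B_K‖_∞ ≤ (d_max/(d_max+1))^{K+1}, where ‖·‖_∞ is the maximum absolute row sum norm. -/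
open Matrix Finset

theorem truncation_error_bound
    {n : ℕ} (hn : 0 < n) (G : SimpleGraph (Fin n)) [DecidableRel G.Adj]
    (K : ℕ) (P B BK : Matrix (Fin n) (Fin n) ℝ)
    (hP : P = (1 + G.degMatrix ℝ)⁻¹ * G.adjMatrix ℝ)
    (hB : B = (1 + G.lapMatrix ℝ)⁻¹)
    (hBK : BK = (∑ k ∈ Finset.range (K + 1), P ^ k) * (1 + G.degMatrix ℝ)⁻¹)
    (dmax : ℕ) (hdmax : dmax = Finset.univ.sup (fun i => G.degree i)) :
    (⨆ i, ∑ j, |(B - BK) i j|) ≤ ((dmax : ℝ) / ((dmax : ℝ) + 1)) ^ (K + 1) := by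
  haveI : Nonempty (Fin n) := Fin.pos_iff_nonempty.mp hn
  set M := 1 + G.lapMatrix ℝ with hM
  set Dg := (1 : Matrix (Fin n) (Fin n) ℝ) + G.degMatrix ℝ with hDg
  set w : Fin n → ℝ := fun i => 1 + (G.degree i : ℝ) with hw
  have hwpos : ∀ i, 0 < w i := fun i => by positivity
  have hDgdiag : Dg = Matrix.diagonal w := by
    rw [hDg, SimpleGraph.degMatrix, ← Matrix.diagonal_one, Matrix.diagonal_add]
  have hDgDinv : Dg * Matrix.diagonal (fun i => (w i)⁻¹) = 1 := by
    rw [hDgdiag, Matrix.diagonal_mul_diagonal, ← Matrix.diagonal_one]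
    exact congrArg Matrix.diagonal (funext fun i => mul_inv_cancel₀ (hwpos i).ne')
  have hDinvDg : Matrix.diagonal (fun i => (w i)⁻¹) * Dg = 1 := by
    rw [hDgdiag, Matrix.diagonal_mul_diagonal, ← Matrix.diagonal_one]
    exact congrArg Matrix.diagonal (funext fun i => inv_mul_cancel₀ (hwpos i).ne')
  have hDginv : Dg⁻¹ = Matrix.diagonal (fun i => (w i)⁻¹) :=
    Matrix.inv_eq_right_inv hDgDinv
  have hDgDginv : Dg * Dg⁻¹ = 1 := by rw [hDginv]; exact hDgDinv
  have hDginvDg : Dg⁻¹ * Dg = 1 := by rw [hDginv]; exact hDinvDg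
  -- M is invertible
  have hMpd : M.PosDef := Matrix.PosDef.add_posSemidef Matrix.PosDef.one
    (SimpleGraph.posSemidef_lapMatrix ℝ G)
  have hMdet : IsUnit M.det := (Matrix.isUnit_iff_isUnit_det M).mp hMpd.isUnit
  have hMB : M * B = 1 := by rw [hB]; exact Matrix.mul_nonsing_inv M hMdet
  have hBM : B * M = 1 := by rw [hB]; exact Matrix.nonsing_inv_mul M hMdet
  -- factorization M = Dg * (1 - P)
  have hfact : M = Dg * (1 - P) := by
    rw [hP, Matrix.mul_sub, mul_one, ← Matrix.mul_assoc, hDgDginv, one_mul]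
    rw [hM, hDg, SimpleGraph.lapMatrix]
    abel
  -- B = Dg⁻¹ + P * B
  have h3 : B - P * B = Dg⁻¹ := by
    have h1 : Dg * ((1 - P) * B) = 1 := by rw [← Matrix.mul_assoc, ← hfact, hMB]
    have h2 : (1 - P) * B = Dg⁻¹ := by
      have h := congrArg (fun X => Dg⁻¹ * X) h1
      simp only [← Matrix.mul_assoc, hDginvDg, one_mul, mul_one] at h
      exact h
    rw [← h2, Matrix.sub_mul, one_mul]
  have hstep : B = Dg⁻¹ + P * B := sub_eq_iff_eq_add.mp h3
  -- geometric sum identity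
  have hgeo : ∀ m : ℕ, (∑ k ∈ Finset.range (m + 1), P ^ k) * Dg⁻¹ = B - P ^ (m + 1) * B := by
    intro m
    induction m with
    | zero =>
      rw [show (0:ℕ)+1 = 1 from rfl, Finset.range_one, Finset.sum_singleton, pow_zero,
        one_mul, pow_one]
      exact h3.symm
    | succ m ih =>
      rw [Finset.sum_range_succ, Matrix.add_mul, ih]
      have hPD : P ^ (m + 1) * Dg⁻¹ = P ^ (m + 1) * B - P ^ (m + 2) * B := by
        calc P ^ (m+1) * Dg⁻¹ = P ^ (m+1) * (B - P * B) := by rw [h3]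
          _ = P ^ (m+1) * B - P ^ (m+2) * B := by
              rw [Matrix.mul_sub, ← Matrix.mul_assoc, ← pow_succ]
      rw [hPD]; abel
  have hdiff : B - BK = P ^ (K + 1) * B := by
    rw [hBK, hgeo K]; abel
  -- entrywise facts
  set r : ℝ := (dmax : ℝ) / ((dmax : ℝ) + 1) with hr
  have hrnn : 0 ≤ r := by positivity
  have hPentry : ∀ i j, P i j = (w i)⁻¹ * G.adjMatrix ℝ i j := by
    intro i j
    rw [hP, hDginv, Matrix.diagonal_mul]
  have hAnn : ∀ i j, (0:ℝ) ≤ G.adjMatrix ℝ i j := by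
    intro i j
    rw [SimpleGraph.adjMatrix_apply]
    split <;> norm_num
  have hPnn : ∀ i j, 0 ≤ P i j := by
    intro i j
    rw [hPentry]
    exact mul_nonneg (inv_nonneg.mpr (hwpos i).le) (hAnn i j)
  have hArow : ∀ i, ∑ j, G.adjMatrix ℝ i j = (G.degree i : ℝ) := by
    intro i
    have h := SimpleGraph.adjMatrix_mulVec_const_apply (α := ℝ) (G := G) (a := 1) (v := i)
    simpa [Matrix.mulVec, dotProduct] using h
  have hProw : ∀ i, ∑ j, P i j ≤ r := by
    intro i
    rw [Finset.sum_congr rfl (fun j _ => hPentry i j), ← Finset.mul_sum, hArow]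
    have hdle : (G.degree i : ℝ) ≤ (dmax : ℝ) := by
      have h : G.degree i ≤ dmax := by
        rw [hdmax]
        exact Finset.le_sup (f := fun i => G.degree i) (Finset.mem_univ i)
      exact_mod_cast h
    have hwi : w i = 1 + (G.degree i : ℝ) := rfl
    have hd0 : (0:ℝ) ≤ (G.degree i : ℝ) := by positivity
    rw [hr, inv_mul_eq_div, div_le_div_iff₀ (hwpos i) (by positivity)]
    nlinarith
  have hPpownn : ∀ k, ∀ i j, 0 ≤ (P ^ k) i j := by
    intro k
    induction k with
    | zero =>
      intro i j
      simp only [pow_zero, Matrix.one_apply]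
      split <;> norm_num
    | succ k ih =>
      intro i j
      rw [pow_succ, Matrix.mul_apply]
      exact Finset.sum_nonneg fun m _ => mul_nonneg (ih i m) (hPnn m j)
  have hPpowrow : ∀ k, ∀ i, ∑ j, (P ^ k) i j ≤ r ^ k := by
    intro k
    induction k with
    | zero => intro i; simp [Matrix.one_apply]
    | succ k ih =>
      intro i
      calc ∑ j, (P ^ (k+1)) i j = ∑ m, (P ^ k) i m * (∑ j, P m j) := by
            simp only [pow_succ, Matrix.mul_apply, Finset.mul_sum]
            rw [Finset.sum_comm]
        _ ≤ ∑ m, (P ^ k) i m * r :=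
            Finset.sum_le_sum fun m _ => mul_le_mul_of_nonneg_left (hProw m) (hPpownn k i m)
        _ = (∑ m, (P ^ k) i m) * r := by rw [← Finset.sum_mul]
        _ ≤ r ^ k * r := mul_le_mul_of_nonneg_right (ih i) hrnn
        _ = r ^ (k+1) := (pow_succ r k).symm
  -- B has nonnegative entries
  have hBnn : ∀ i j, 0 ≤ B i j := by
    intro i j
    obtain ⟨i₀, -, hmin⟩ := Finset.exists_min_image Finset.univ (fun m => B m j)
      ⟨Classical.arbitrary (Fin n), Finset.mem_univ _⟩
    have hmin' : ∀ m, B i₀ j ≤ B m j := fun m => hmin m (Finset.mem_univ m)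
    have hMentry : ∀ m, M i₀ m = (if i₀ = m then 1 + (G.degree i₀ : ℝ) else 0)
        - G.adjMatrix ℝ i₀ m := by
      intro m
      rw [hM]
      simp only [Matrix.add_apply, Matrix.one_apply, SimpleGraph.lapMatrix, Matrix.sub_apply,
        SimpleGraph.degMatrix, Matrix.diagonal_apply]
      by_cases h : i₀ = m <;> simp [h]
    have key : (M * B) i₀ j ≤ B i₀ j := by
      rw [Matrix.mul_apply]
      calc ∑ m, M i₀ m * B m j
          = (1 + (G.degree i₀ : ℝ)) * B i₀ j - ∑ m, G.adjMatrix ℝ i₀ m * B m j := by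
            rw [Finset.sum_congr rfl (fun m _ => by rw [hMentry m, sub_mul])]
            rw [Finset.sum_sub_distrib]
            congr 1
            simp [ite_mul, Finset.sum_ite_eq]
        _ ≤ (1 + (G.degree i₀ : ℝ)) * B i₀ j - ∑ m, G.adjMatrix ℝ i₀ m * B i₀ j := by
            apply sub_le_sub_left
            exact Finset.sum_le_sum fun m _ =>
              mul_le_mul_of_nonneg_left (hmin' m) (hAnn i₀ m)
        _ = B i₀ j := by rw [← Finset.sum_mul, hArow]; ring
    have h1 : (M * B) i₀ j = (1 : Matrix (Fin n) (Fin n) ℝ) i₀ j := by rw [hMB]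
    have h0 : (0:ℝ) ≤ (1 : Matrix (Fin n) (Fin n) ℝ) i₀ j := by
      rw [Matrix.one_apply]
      split <;> norm_num
    exact le_trans (h1 ▸ h0 : (0:ℝ) ≤ (M * B) i₀ j) (le_trans key (hmin' i))
  -- row sums of B are 1
  have hBrow : ∀ i, ∑ j, B i j = 1 := by
    have hMone : M *ᵥ (fun _ => (1:ℝ)) = fun _ => 1 := by
      rw [hM, Matrix.add_mulVec, SimpleGraph.lapMatrix_mulVec_const_eq_zero]
      simp
    have hBone : B *ᵥ (fun _ => (1:ℝ)) = fun _ => 1 := by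
      calc B *ᵥ (fun _ => (1:ℝ)) = B *ᵥ (M *ᵥ fun _ => 1) := by rw [hMone]
        _ = (B * M) *ᵥ (fun _ => 1) := Matrix.mulVec_mulVec _ _ _
        _ = fun _ => 1 := by rw [hBM]; simp
    intro i
    have h := congrFun hBone i
    simpa [Matrix.mulVec, dotProduct] using h
  -- conclude
  apply ciSup_le
  intro i
  calc ∑ j, |(B - BK) i j| = ∑ j, (P ^ (K+1) * B) i j := by
        apply Finset.sum_congr rfl
        intro j _
        rw [hdiff, abs_of_nonneg]
        rw [Matrix.mul_apply]
        exact Finset.sum_nonneg fun m _ => mul_nonneg (hPpownn (K+1) i m) (hBnn m j)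
    _ = ∑ m, (P ^ (K+1)) i m * (∑ j, B m j) := by
        simp only [Matrix.mul_apply, Finset.mul_sum]
        rw [Finset.sum_comm]
    _ = ∑ m, (P ^ (K+1)) i m := by
        apply Finset.sum_congr rfl
        intro m _
        rw [hBrow m, mul_one]
    _ ≤ r ^ (K+1) := hPpowrow (K+1) i
end
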